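/- Let (R, m) be a commutative Noetherian local ring with depth R ≥ 1, let I ≠ m be an m-primary ideal, and set J = (I :_R m). Then H^1_m(J ⊗_R J) ≠ 0. -/

import Mathlib

/-! Common definitions: local cohomology with respect to specialization-closed subsets,
depth, grade, homological dimensions, Tate homology, etc. -/

open CategoryTheory

universe u

section SpecClosed

variable (R : Type u) [CommRing R]

/-- A subset of the prime spectrum is specialization-closed if it is closed under
passing to larger primes. -/
def IsSpecClosed (Z : Set (PrimeSpectrum R)) : Prop :=
  ∀ ⦃p q : PrimeSpectrum R⦄, p ∈ Z → p.asIdeal ≤ q.asIdeal → q ∈ Z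

variable (Z : Set (PrimeSpectrum R))

/-- The `Z`-torsion submodule `Γ_Z(M) = { m | Supp(Rm) ⊆ Z }` (described via annihilators:
`Supp(Rm) = V(Ann m)`). -/
def torsionZ (M : Type u) [AddCommGroup M] [Module R M] : Submodule R M where
  carrier := {m : M | ∀ p : PrimeSpectrum R, (R ∙ m).annihilator ≤ p.asIdeal → p ∈ Z}
  zero_mem' := by
    intro p hp
    exfalso
    apply p.isPrime.ne_top
    rw [eq_top_iff]
    refine le_trans ?_ hp
    intro r _
    rw [Submodule.mem_annihilator_span_singleton, smul_zero]
  add_mem' := by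
    intro a b ha hb p hp
    have h : (R ∙ a).annihilator ⊓ (R ∙ b).annihilator ≤ p.asIdeal := by
      refine le_trans ?_ hp
      intro r hr
      rw [Submodule.mem_inf, Submodule.mem_annihilator_span_singleton,
        Submodule.mem_annihilator_span_singleton] at hr
      rw [Submodule.mem_annihilator_span_singleton, smul_add, hr.1, hr.2, add_zero]
    rcases (Ideal.IsPrime.inf_le p.isPrime).mp h with h' | h'
    · exact ha p h'
    · exact hb p h'
  smul_mem' := by
    intro c m hm p hp
    refine hm p (le_trans ?_ hp)
    intro r hr
    rw [Submodule.mem_annihilator_span_singleton] at hr ⊢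
    rw [smul_comm, hr, smul_zero]

lemma torsionZ_map_mem {M N : Type u} [AddCommGroup M] [Module R M] [AddCommGroup N]
    [Module R N] (f : M →ₗ[R] N) (m : M) (hm : m ∈ torsionZ R Z M) :
    f m ∈ torsionZ R Z N := by
  intro p hp
  refine hm p (le_trans ?_ hp)
  intro r hr
  rw [Submodule.mem_annihilator_span_singleton] at hr ⊢
  rw [← map_smul, hr, map_zero]

/-- The `Z`-torsion functor `Γ_Z : Mod_R ⥤ Mod_R`. -/
@[simps]
noncomputable def gammaZ : ModuleCat.{u} R ⥤ ModuleCat.{u} R where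
  obj M := ModuleCat.of R (torsionZ R Z M)
  map {M N} f := ModuleCat.ofHom (LinearMap.restrict f.hom (fun m hm => torsionZ_map_mem R Z f.hom m hm))
  map_id _ := by ext; rfl
  map_comp _ _ := by ext; rfl

instance : (gammaZ R Z).Additive where
  map_add := by intros; ext; rfl

/-- Local cohomology with respect to a subset `Z ⊆ Spec R`, defined as the
right derived functors of the `Z`-torsion functor `Γ_Z`. -/
noncomputable def localCohomologyZ (i : ℕ) : ModuleCat.{u} R ⥤ ModuleCat.{u} R :=
  (gammaZ R Z).rightDerived i

/-- `H^i_Z(M)`, the `i`-th local cohomology of `M` with respect to `Z`. -/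
noncomputable abbrev HZ (i : ℕ) (M : Type u) [AddCommGroup M] [Module R M] :=
  ((localCohomologyZ R Z i).obj (ModuleCat.of R M))

/-- The grade of `M` with respect to `Z`: the least `i` with `H^i_Z(M) ≠ 0`
(`⊤` if there is no such `i`). -/
noncomputable def gradeZ (M : Type u) [AddCommGroup M] [Module R M] : ℕ∞ :=
  sInf {i : ℕ∞ | ∃ n : ℕ, i = n ∧ Nontrivial (HZ R Z n M)}

end SpecClosed

/-- The closed subset `V(m) ⊆ Spec R` of a local ring; local cohomology with respect to it
is the classical local cohomology `H^i_m`. -/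
def maxSet (R : Type u) [CommRing R] [IsLocalRing R] : Set (PrimeSpectrum R) :=
  {p | IsLocalRing.maximalIdeal R ≤ p.asIdeal}

section Depth

/-- The depth of a module over a local ring: the supremum of lengths of weakly regular
sequences on `M` contained in the maximal ideal. (The zero module has depth `⊤`.) -/
noncomputable def moduleDepth (R : Type u) [CommRing R] [IsLocalRing R]
    (M : Type u) [AddCommGroup M] [Module R M] : ℕ∞ :=
  sSup {n : ℕ∞ | ∃ rs : List R, (rs.length : ℕ∞) = n ∧
    (∀ r ∈ rs, r ∈ IsLocalRing.maximalIdeal R) ∧ RingTheory.Sequence.IsWeaklyRegular M rs}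

/-- The depth of the localized module `M_p` over the local ring `R_p`. -/
noncomputable def localizedDepth (R : Type u) [CommRing R] (p : PrimeSpectrum R)
    (M : Type u) [AddCommGroup M] [Module R M] : ℕ∞ :=
  moduleDepth (Localization.AtPrime p.asIdeal) (LocalizedModule p.asIdeal.primeCompl M)

/-- The height of a prime ideal, as the height of the corresponding point of `Spec R`. -/
noncomputable def primeHeight {R : Type u} [CommRing R] (p : PrimeSpectrum R) : ℕ∞ :=
  Order.height p

/-- Serre's condition `(S_n)`: `depth M_p ≥ min(n, ht p)` for all primes `p`. -/
def SerreSn (R : Type u) [CommRing R] (M : Type u) [AddCommGroup M] [Module R M]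
    (n : ℕ) : Prop :=
  ∀ p : PrimeSpectrum R, min (n : ℕ∞) (primeHeight p) ≤ localizedDepth R p M

/-- A module `N` over a local ring `S` is maximal Cohen–Macaulay if `depth N = dim S`
(for nonzero finitely generated `N`; the zero module is trivially allowed since its
depth is `⊤`). -/
def IsMaximalCohenMacaulay (S : Type u) [CommRing S] [IsLocalRing S]
    (N : Type u) [AddCommGroup N] [Module S N] : Prop :=
  ringKrullDim S ≤ (moduleDepth S N : WithBot ℕ∞)

/-- A local ring is Cohen–Macaulay if it is Noetherian and its depth equals its dimension. -/
def IsCohenMacaulayLocalRing (R : Type u) [CommRing R] [IsLocalRing R] : Prop :=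
  IsNoetherianRing R ∧ (moduleDepth R R : WithBot ℕ∞) = ringKrullDim R

/-- A ring is regular local if it is Noetherian local and its maximal ideal is generated
by `dim R` elements. -/
def IsRegularLocal (R : Type u) [CommRing R] : Prop :=
  ∃ _ : IsLocalRing R, IsNoetherianRing R ∧
    ∃ s : Finset R, Ideal.span (s : Set R) = IsLocalRing.maximalIdeal R ∧
      ((s.card : ℕ∞) : WithBot ℕ∞) = ringKrullDim R

/-- A local ring is a complete intersection if it is Noetherian and its `m`-adic completion
is a quotient of a regular local ring by an ideal generated by a regular sequence. -/
def IsCompleteIntersectionLocal (R : Type u) [CommRing R] [IsLocalRing R] : Prop :=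
  IsNoetherianRing R ∧
  ∃ (Q : Type u) (_ : CommRing Q), IsRegularLocal Q ∧
    ∃ rs : List Q, RingTheory.Sequence.IsRegular Q rs ∧
      Nonempty ((AdicCompletion (IsLocalRing.maximalIdeal R) R) ≃+* (Q ⧸ Ideal.ofList rs))

end Depth

section HomologicalAlgebra

variable (R : Type u) [CommRing R]

/-- `Ext_R^n(M, N)`, as an object of `ModuleCat R` (derived functor `Ext` of `Hom`). -/
noncomputable abbrev ExtMod (n : ℕ) (M N : Type u) [AddCommGroup M] [Module R M]
    [AddCommGroup N] [Module R N] : ModuleCat.{u} R :=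
  ((Ext R (ModuleCat.{u} R) n).obj (Opposite.op (ModuleCat.of R M))).obj (ModuleCat.of R N)

/-- `Tor^R_n(M, N)`, as an object of `ModuleCat R` (derived functor of the tensor product). -/
noncomputable abbrev TorMod (n : ℕ) (M N : Type u) [AddCommGroup M] [Module R M]
    [AddCommGroup N] [Module R N] : ModuleCat.{u} R :=
  ((Tor (ModuleCat.{u} R) n).obj (ModuleCat.of R M)).obj (ModuleCat.of R N)

/-- A module `N` is Tor-rigid if for every module `X`, the vanishing of a single
`Tor_j(X, N)` with `j ≥ 1` forces the vanishing of `Tor_i(X, N)` for all `i ≥ j`. -/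
def IsTorRigid (N : Type u) [AddCommGroup N] [Module R N] : Prop :=
  ∀ (X : Type u) [AddCommGroup X] [Module R X], ∀ j : ℕ, 1 ≤ j →
    Subsingleton (TorMod R j X N) → ∀ i, j ≤ i → Subsingleton (TorMod R i X N)

/-- `M` has projective dimension at most `n`. -/
def pdLE : (n : ℕ) → (M : Type u) → [AddCommGroup M] → [Module R M] → Prop
  | 0, M, _, _ => Module.Projective R M
  | (n+1), M, _, _ => ∃ (P : Type u) (_ : AddCommGroup P) (_ : Module R P)
      (f : P →ₗ[R] M), Module.Projective R P ∧ Function.Surjective f ∧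
        pdLE n (LinearMap.ker f)

open Classical in
/-- The projective dimension of a module: `⊥` for the zero module, `⊤` if infinite. -/
noncomputable def projDim (M : Type u) [AddCommGroup M] [Module R M] : WithBot ℕ∞ :=
  if Subsingleton M then ⊥
  else sInf {d : WithBot ℕ∞ | ∃ n : ℕ, d = (n : ℕ∞) ∧ pdLE R n M}

/-- `M` has injective dimension at most `n`. -/
def idLE : (n : ℕ) → (M : Type u) → [AddCommGroup M] → [Module R M] → Prop
  | 0, M, _, _ => Module.Injective R M
  | (n+1), M, _, _ => ∃ (E : Type u) (_ : AddCommGroup E) (_ : Module R E)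
      (f : M →ₗ[R] E), Module.Injective R E ∧ Function.Injective f ∧
        idLE n (E ⧸ LinearMap.range f)

/-- A local ring is Gorenstein if it is Noetherian and of finite self-injective dimension. -/
def IsGorensteinLocal : Prop :=
  IsLocalRing R ∧ IsNoetherianRing R ∧ ∃ n : ℕ, idLE R n R

/-- `M` is totally reflexive (i.e. of Gorenstein dimension zero): it is finitely generated,
reflexive, and `Ext^i(M, R) = 0 = Ext^i(M^*, R)` for all `i ≥ 1`. -/
def IsTotallyReflexive (M : Type u) [AddCommGroup M] [Module R M] : Prop :=
  Module.Finite R M ∧ Function.Bijective (Module.Dual.eval R M) ∧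
    ∀ i : ℕ, 1 ≤ i → Subsingleton (ExtMod R i M R) ∧
      Subsingleton (ExtMod R i (Module.Dual R M) R)

/-- `M` has Gorenstein dimension at most `n`. -/
def GdimLE : (n : ℕ) → (M : Type u) → [AddCommGroup M] → [Module R M] → Prop
  | 0, M, _, _ => IsTotallyReflexive R M
  | (n+1), M, _, _ => ∃ (G : Type u) (_ : AddCommGroup G) (_ : Module R G)
      (f : G →ₗ[R] M), IsTotallyReflexive R G ∧ Function.Surjective f ∧
        GdimLE n (LinearMap.ker f)

/-- The non-free locus `NF(M) = { p | M_p is not R_p-free }`. -/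
def nonFreeLocus (M : Type u) [AddCommGroup M] [Module R M] : Set (PrimeSpectrum R) :=
  {p | ¬ Module.Free (Localization.AtPrime p.asIdeal) (LocalizedModule p.asIdeal.primeCompl M)}

/-- `M` is locally free on the punctured spectrum of the local ring `R`. -/
def LocFreeOnPunctured [IsLocalRing R] (M : Type u) [AddCommGroup M] [Module R M] : Prop :=
  ∀ p : PrimeSpectrum R, p.asIdeal ≠ IsLocalRing.maximalIdeal R →
    Module.Free (Localization.AtPrime p.asIdeal) (LocalizedModule p.asIdeal.primeCompl M)

/-- The minimal number of generators of a module. -/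
noncomputable def minGens (M : Type u) [AddCommGroup M] [Module R M] : ℕ :=
  sInf {n : ℕ | ∃ s : Finset M, s.card = n ∧ Submodule.span R (s : Set M) = ⊤}

/-- The complexity `cx_R(M, N)` of a pair of modules: the least `b` such that
`ν_R(Ext^n_R(M, N)) ≤ a·n^(b-1)` for some `a` and all large `n` (`⊤` if there is none). -/
noncomputable def complexityPair (M N : Type u) [AddCommGroup M] [Module R M]
    [AddCommGroup N] [Module R N] : ℕ∞ :=
  sInf {c : ℕ∞ | ∃ b : ℕ, c = b ∧ ∃ a : ℝ, ∃ n₀ : ℕ, ∀ n : ℕ, n₀ ≤ n →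
    (minGens R (ExtMod R n M N) : ℝ) ≤ a * (n : ℝ) ^ ((b : ℝ) - 1)}

/-- The grade of the pair `(A, K)`: the least `i` with `Ext^i_R(A, K) ≠ 0`
(`⊤` if there is none). -/
noncomputable def gradePair (A K : Type u) [AddCommGroup A] [Module R A]
    [AddCommGroup K] [Module R K] : ℕ∞ :=
  sInf {i : ℕ∞ | ∃ n : ℕ, i = n ∧ Nontrivial (ExtMod R n A K)}

end HomologicalAlgebra

section Tate

variable (R : Type u) [CommRing R]

/-- A complete resolution of an `R`-module `M`: a totally acyclic complex `T` of finitely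
generated free modules, a projective resolution `P` of `M`, and a chain map `τ : T ⟶ P`
which is an isomorphism in all sufficiently high degrees. -/
structure CompleteResolution (M : Type u) [AddCommGroup M] [Module R M] where
  /-- the totally acyclic complex -/
  T : ChainComplex (ModuleCat.{u} R) ℤ
  /-- the projective resolution of `M` -/
  P : ChainComplex (ModuleCat.{u} R) ℤ
  free : ∀ i : ℤ, Module.Free R (T.X i)
  fin : ∀ i : ℤ, Module.Finite R (T.X i)
  t_exact : ∀ i : ℤ, Function.Exact (T.d (i+1) i) (T.d i (i-1))
  t_dual_exact : ∀ i : ℤ, Function.Exact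
    (LinearMap.dualMap ((T.d i (i-1)).hom : T.X i →ₗ[R] T.X (i-1)))
    (LinearMap.dualMap ((T.d (i+1) i).hom : T.X (i+1) →ₗ[R] T.X i))
  proj : ∀ i : ℤ, Projective (P.X i)
  p_bounded : ∀ i : ℤ, i < 0 → Subsingleton (P.X i)
  p_exact : ∀ i : ℤ, i ≠ 0 → Function.Exact (P.d (i+1) i) (P.d i (i-1))
  π : P.X 0 →ₗ[R] M
  π_surj : Function.Surjective π
  π_exact : Function.Exact (P.d 1 0) π
  τ : T ⟶ P
  bound : ℤ
  τ_iso : ∀ i : ℤ, bound ≤ i → Function.Bijective (τ.f i)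

/-- The Tate homology `TateTor^R_i(M, N)` computed from a complete resolution of `M`: the
degree `i` homology of `T ⊗_R N`. -/
noncomputable abbrev tateTor {M : Type u} [AddCommGroup M] [Module R M]
    (C : CompleteResolution R M) (N : Type u) [AddCommGroup N] [Module R N] (i : ℤ) :=
  (LinearMap.ker (LinearMap.rTensor N ((C.T.d i (i-1)).hom : C.T.X i →ₗ[R] C.T.X (i-1)))) ⧸
    (Submodule.comap
      (LinearMap.ker (LinearMap.rTensor N ((C.T.d i (i-1)).hom : C.T.X i →ₗ[R] C.T.X (i-1)))).subtype
      (LinearMap.range (LinearMap.rTensor N ((C.T.d (i+1) i).hom : C.T.X (i+1) →ₗ[R] C.T.X i))))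

end Tate

section Frobenius

variable (R : Type u) [CommRing R]

/-- `R` viewed as an `R`-module via the `n`-th iterate of the Frobenius endomorphism
`φ(a) = a^p`: the action is `r · b = r^(p^n) * b`. -/
def FrobeniusTwist (p : ℕ) (n : ℕ) : Type u := R

instance (p n : ℕ) : AddCommGroup (FrobeniusTwist R p n) := inferInstanceAs (AddCommGroup R)

noncomputable instance (p n : ℕ) [ExpChar R p] : Module R (FrobeniusTwist R p n) :=
  Module.compHom R (iterateFrobenius R p n)

end Frobenius

section Syzygy

/-- `S` is an `i`-th syzygy of the residue field of the local ring `R`, computed from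
minimal free covers. -/
def IsMinSyzygyOfResidueField (R : Type u) [CommRing R] [IsLocalRing R] :
    (i : ℕ) → (S : Type u) → [AddCommGroup S] → [Module R S] → Prop
  | 0, S, _, _ => Nonempty (S ≃ₗ[R] IsLocalRing.ResidueField R)
  | (i+1), S, _, _ => ∃ (N : Type u) (_ : AddCommGroup N) (_ : Module R N)
      (F : Type u) (_ : AddCommGroup F) (_ : Module R F) (f : F →ₗ[R] N),
      Module.Free R F ∧ Module.Finite R F ∧ IsMinSyzygyOfResidueField R i N ∧
      Function.Surjective f ∧
      LinearMap.ker f ≤ (IsLocalRing.maximalIdeal R) • (⊤ : Submodule R F) ∧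
      Nonempty (S ≃ₗ[R] LinearMap.ker f)

end Syzygy

section CIDim

variable (R : Type u) [CommRing R] [IsLocalRing R]

/-- `M` has finite complete intersection dimension: there is a quasi-deformation
`R → A ↞ Q` (with `R → A` faithfully flat local and `Q ↠ A` surjective local with kernel
generated by a regular sequence) such that `pd_Q(A ⊗_R M)` is finite. -/
def HasFiniteCIDim (M : Type u) [AddCommGroup M] [Module R M] : Prop :=
  ∃ (A : Type u) (_ : CommRing A) (_ : IsLocalRing A)
    (Q : Type u) (_ : CommRing Q) (_ : IsLocalRing Q)
    (φ : R →+* A) (σ : Q →+* A),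
      IsLocalHom φ ∧ IsLocalHom σ ∧ Function.Surjective σ ∧
      (∃ rs : List Q, RingHom.ker σ = Ideal.ofList rs ∧ RingTheory.Sequence.IsRegular Q rs) ∧
      (letI : Module R A := Module.compHom A φ
       Module.FaithfullyFlat R A ∧
       (letI : SMulCommClass R A A := ⟨fun r a b => mul_left_comm (φ r) a b⟩
        letI : Module Q (TensorProduct R A M) := Module.compHom (TensorProduct R A M) σ
        ∃ n : ℕ, pdLE Q n (TensorProduct R A M)))

end CIDim

/-! Let `μ : J ⊗ J → R` be multiplication. Its kernel is killed by `J²`, which contains a power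
of `m`, so by Artin–Rees `μ` is injective on some `mⁿ (J ⊗ J)` and has a linear section `s` on
the `m`-primary ideal `a = mⁿ J²`. Embed `J ⊗ J` in an injective module `E`, extend `s` along
`a ⊆ R` to `g : R → E` and put `ξ = g 1`; it is `m`-torsion modulo `J ⊗ J`. If `ξ = z + γ` with
`z ∈ J ⊗ J` and `γ ∈ Γ_m(E)`, extending `μ` to `E → E(R)` shows that `1 - μ z` is `m`-torsion,
hence `0` because `depth R ≥ 1`; but `μ z ∈ J² ⊆ m`. So `Γ_m(E) → Γ_m(E / J ⊗ J)` is not onto,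
and its cokernel embeds in `H¹_m(J ⊗ J)`. -/

section Torsion

variable {R : Type u} [CommRing R] {Z : Set (PrimeSpectrum R)}
  {M N : Type u} [AddCommGroup M] [Module R M] [AddCommGroup N] [Module R N]

lemma mem_torsionZ_of_annihilator_le {x : M} {y : N}
    (h : (R ∙ x).annihilator ≤ (R ∙ y).annihilator) (hx : x ∈ torsionZ R Z M) :
    y ∈ torsionZ R Z N :=
  fun p hp => hx p (h.trans hp)

lemma mem_torsionZ_of_le_annihilator {a : Ideal R}
    (ha : ∀ p : PrimeSpectrum R, a ≤ p.asIdeal → p ∈ Z) {x : M}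
    (hx : a ≤ (R ∙ x).annihilator) : x ∈ torsionZ R Z M :=
  fun p hp => ha p (hx.trans hp)

lemma mem_torsionZ_of_injective_apply {f : M →ₗ[R] N} (hf : Function.Injective f) {x : M}
    (hx : f x ∈ torsionZ R Z N) : x ∈ torsionZ R Z M :=
  mem_torsionZ_of_annihilator_le (fun r hr => by
    rw [Submodule.mem_annihilator_span_singleton] at hr ⊢
    exact hf (by rw [map_smul, hr, map_zero])) hx

lemma torsionZ_maxSet_eq_bot_of_isSMulRegular [IsLocalRing R] {t : R}
    (ht : t ∈ IsLocalRing.maximalIdeal R) (hreg : IsSMulRegular M t) :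
    torsionZ R (maxSet R) M = ⊥ := by
  refine eq_bot_iff.mpr fun x hx => ?_
  obtain ⟨k, hk⟩ : t ∈ ((R ∙ x).annihilator).radical := by
    rw [Ideal.radical_eq_sInf, Submodule.mem_sInf]
    rintro p ⟨hxp, hp⟩
    exact hx ⟨p, hp⟩ hxp ht
  rw [Submodule.mem_annihilator_span_singleton] at hk
  exact (hreg.pow k) (hk.trans (smul_zero _).symm)

lemma exists_isSMulRegular_of_one_le_moduleDepth [IsLocalRing R]
    (h : 1 ≤ moduleDepth R M) : ∃ t ∈ IsLocalRing.maximalIdeal R, IsSMulRegular M t := by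
  obtain ⟨_, ⟨rs, rfl, hmem, hreg⟩, hpos⟩ := lt_sSup_iff.mp (zero_lt_one.trans_le h)
  obtain ⟨t, rest, rfl⟩ := List.exists_cons_of_ne_nil (by rintro rfl; simp at hpos : rs ≠ [])
  exact ⟨t, hmem t List.mem_cons_self,
    ((RingTheory.Sequence.isWeaklyRegular_cons_iff M t rest).mp hreg).1⟩

end Torsion

section Modules

variable {R : Type u} [CommRing R] {M N : Type u} [AddCommGroup M] [Module R M]
  [AddCommGroup N] [Module R N]

lemma Ideal.exists_pow_smul_top_inf_eq_bot [IsNoetherianRing R] [Module.Finite R M]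
    (I : Ideal R) {K : Submodule R M} {c : ℕ} (hK : I ^ c • K = ⊥) :
    ∃ n : ℕ, I ^ n • ⊤ ⊓ K = ⊥ := by
  obtain ⟨k, hk⟩ := I.exists_pow_inf_eq_pow_smul K
  refine ⟨k + c, eq_bot_iff.mpr ?_⟩
  rw [hk (k + c) (Nat.le_add_right k c), Nat.add_sub_cancel_left, ← hK]
  exact smul_mono_right _ inf_le_right

lemma LinearMap.exists_rightInverse_on_of_le_map (f : M →ₗ[R] N) {P : Submodule R M}
    (hP : Disjoint P (LinearMap.ker f)) {Q : Submodule R N} (hQ : Q ≤ P.map f) :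
    ∃ g : Q →ₗ[R] M, ∀ w, f (g w) = w := by
  let e := LinearEquiv.ofInjective _ (LinearMap.injective_domRestrict_iff.mpr hP)
  refine ⟨P.subtype ∘ₗ e.symm.toLinearMap ∘ₗ
    Submodule.inclusion (hQ.trans (LinearMap.range_domRestrict P f).ge), fun w => ?_⟩
  exact congrArg Subtype.val (e.apply_symm_apply _)

open TensorProduct in
lemma Submodule.mul_smul_eq_mulMap_smul_tmul (J K : Ideal R) (u : J) (v : K) (x : J ⊗[R] K) :
    (u.1 * v.1) • x = Submodule.mulMap J K x • (u ⊗ₜ[R] v) := by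
  induction x using TensorProduct.induction_on with
  | zero => simp
  | tmul a b =>
    have hua : u.1 • a = a.1 • u := Subtype.ext (mul_comm _ _)
    have hvb : v.1 • b = b.1 • v := Subtype.ext (mul_comm _ _)
    rw [Submodule.mulMap_tmul, ← smul_tmul_smul, ← smul_tmul_smul, hua, hvb]
  | add x y hx hy => rw [smul_add, hx, hy, map_add, add_smul]

lemma Ideal.mul_smul_ker_mulMap_eq_bot (J K : Ideal R) :
    (J * K) • LinearMap.ker (Submodule.mulMap J K) = ⊥ := by
  refine eq_bot_iff.mpr (Submodule.smul_le.mpr fun r hr x hx => ?_)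
  refine Submodule.mul_induction_on hr (fun u hu v hv => ?_) fun p q hp hq => ?_
  · rw [Submodule.mem_bot, Submodule.mul_smul_eq_mulMap_smul_tmul J K ⟨u, hu⟩ ⟨v, hv⟩,
      LinearMap.mem_ker.mp hx, zero_smul]
  · rw [add_smul]
    exact add_mem hp hq

end Modules

section LocalCohomologyOne

open CategoryTheory

variable {R : Type u} [CommRing R] {Z : Set (PrimeSpectrum R)}
  {M : Type u} [AddCommGroup M] [Module R M]

lemma nontrivial_HZ_one_of_notMem_sup_torsionZ
    (h : ∀ (E : ModuleCat.{u} R), Injective E → ∀ f : ModuleCat.of R M ⟶ E, Mono f →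
      ∃ ξ : E, (LinearMap.range f.hom).mkQ ξ ∈ torsionZ R Z (E ⧸ LinearMap.range f.hom) ∧
        ξ ∉ LinearMap.range f.hom ⊔ torsionZ R Z E) :
    Nontrivial (HZ R Z 1 M) := by
  let IR := InjectiveResolution.of (ModuleCat.of R M)
  let d₀ := IR.cocomplex.d 0 1
  let f₀ : ModuleCat.of R M ⟶ IR.cocomplex.X 0 := IR.ι.f 0
  have hexact : LinearMap.range f₀.hom = LinearMap.ker d₀.hom :=
    (ShortComplex.moduleCat_exact_iff_range_eq_ker _).mp IR.exact₀
  obtain ⟨ξ, hξ, hnot⟩ := h _ (IR.injective 0) f₀ (inferInstanceAs (Mono (IR.ι.f 0)))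
  let S := (((gammaZ R Z).mapHomologicalComplex _).obj IR.cocomplex).sc' 0 1 2
  have hd₀ξ : d₀ ξ ∈ torsionZ R Z (IR.cocomplex.X 1) := by
    refine mem_torsionZ_of_annihilator_le (fun r hr => ?_) hξ
    rw [Submodule.mem_annihilator_span_singleton, ← map_smul, Submodule.mkQ_apply,
      Submodule.Quotient.mk_eq_zero, hexact] at hr
    rw [Submodule.mem_annihilator_span_singleton, ← map_smul]
    exact hr
  -- `d₀ ξ` is a cycle of `Γ_Z` of the resolution, and a boundary only if `ξ ∈ M + Γ_Z(E₀)`.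
  let y : LinearMap.ker S.g.hom :=
    ⟨⟨d₀ ξ, hd₀ξ⟩, Subtype.ext (ConcreteCategory.congr_hom (IR.cocomplex.d_comp_d 0 1 2) ξ)⟩
  have : Nontrivial S.moduleCatLeftHomologyData.H := by
    change Nontrivial (LinearMap.ker S.g.hom ⧸ LinearMap.range S.moduleCatToCycles)
    refine ⟨⟨Submodule.Quotient.mk y, 0, fun hy => hnot ?_⟩⟩
    obtain ⟨γ, hγ⟩ := (Submodule.Quotient.mk_eq_zero _).mp hy
    have hγ' : d₀ γ.1 = d₀ ξ := congrArg (fun z => z.1.1) hγ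
    refine Submodule.mem_sup.mpr ⟨ξ - γ.1, ?_, γ.1, γ.2, sub_add_cancel ξ γ.1⟩
    rw [hexact, LinearMap.mem_ker, map_sub, hγ', sub_self]
  let e : HZ R Z 1 M ≅ S.moduleCatLeftHomologyData.H :=
    IR.isoRightDerivedObj (gammaZ R Z) 1 ≪≫
      (((gammaZ R Z).mapHomologicalComplex _).obj IR.cocomplex).homologyIsoSc' 0 1 2
        (CochainComplex.prev_nat_succ 0) (CochainComplex.next ℕ 1) ≪≫
      S.moduleCatHomologyIso
  exact e.toLinearEquiv.toEquiv.nontrivial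

lemma nontrivial_HZ_one_of_rightInverse_on (μ : M →ₗ[R] R) (hμ : (1 : R) ∉ LinearMap.range μ)
    (hR : torsionZ R Z R = ⊥) {a : Ideal R} (ha : ∀ p : PrimeSpectrum R, a ≤ p.asIdeal → p ∈ Z)
    (s : a →ₗ[R] M) (hs : ∀ w, μ (s w) = w) : Nontrivial (HZ R Z 1 M) := by
  refine nontrivial_HZ_one_of_notMem_sup_torsionZ fun E _ f _ => ?_
  have : Mono (ModuleCat.ofHom a.subtype) :=
    (ModuleCat.mono_iff_injective _).mpr Subtype.val_injective
  let g : ModuleCat.of R R ⟶ E :=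
    Injective.factorThru (ModuleCat.ofHom (f.hom ∘ₗ s)) (ModuleCat.ofHom a.subtype)
  let ξ := g 1
  have hξ : ∀ r (hr : r ∈ a), r • ξ = f (s ⟨r, hr⟩) := fun r hr => by
    rw [← map_smul, smul_eq_mul, mul_one]
    exact ConcreteCategory.congr_hom (Injective.comp_factorThru
      (ModuleCat.ofHom (f.hom ∘ₗ s)) (ModuleCat.ofHom a.subtype)) ⟨r, hr⟩
  refine ⟨ξ, mem_torsionZ_of_le_annihilator ha fun r hr => ?_, fun hmem => ?_⟩
  · rw [Submodule.mem_annihilator_span_singleton, ← map_smul, hξ r hr, Submodule.mkQ_apply,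
      Submodule.Quotient.mk_eq_zero]
    exact LinearMap.mem_range_self _ _
  obtain ⟨_, ⟨z, rfl⟩, γ, hγ, hξeq⟩ := Submodule.mem_sup.mp hmem
  let ι := Injective.ι (ModuleCat.of R R)
  have hι : Function.Injective ι := (ModuleCat.mono_iff_injective ι).mp inferInstance
  let ιμ : ModuleCat.of R M ⟶ Injective.under (ModuleCat.of R R) := ModuleCat.ofHom (ι.hom ∘ₗ μ)
  let φ := Injective.factorThru ιμ f
  have hφ : ∀ x, φ (f x) = ι (μ x) :=
    ConcreteCategory.congr_hom (Injective.comp_factorThru ιμ f)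
  have hφξ : φ ξ - ι 1 ∈ torsionZ R Z _ := mem_torsionZ_of_le_annihilator ha fun r hr => by
    rw [Submodule.mem_annihilator_span_singleton, smul_sub, ← map_smul φ.hom, hξ r hr, hφ, hs,
      ← map_smul ι.hom, smul_eq_mul, mul_one, sub_self]
  have hι1 : ι (1 - μ z) ∈ torsionZ R Z _ := by
    have : ι (1 - μ z) = φ γ - (φ ξ - ι 1) := by
      rw [← hξeq, map_add, hφ, map_sub]
      abel
    rw [this]
    exact sub_mem (torsionZ_map_mem R Z φ.hom γ hγ) hφξ
  have h1 := mem_torsionZ_of_injective_apply hι hι1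
  rw [hR, Submodule.mem_bot, sub_eq_zero] at h1
  exact hμ ⟨z, h1.symm⟩

end LocalCohomologyOne

/-- If `depth R ≥ 1`, `I ≠ m` is `m`-primary and `J = (I :_R m)`,
then `H^1_m(J ⊗_R J) ≠ 0`. -/
theorem localCohomology_one_tensor_colon_ne_zero (R : Type u) [CommRing R] [IsLocalRing R]
    [IsNoetherianRing R] (hdepth : 1 ≤ moduleDepth R R)
    (I : Ideal R) (hI : I.radical = IsLocalRing.maximalIdeal R)
    (hne : I ≠ IsLocalRing.maximalIdeal R) :
    Nontrivial (HZ R (maxSet R) 1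
      (TensorProduct R (I.colon (IsLocalRing.maximalIdeal R))
        (I.colon (IsLocalRing.maximalIdeal R)))) := by
  set m := IsLocalRing.maximalIdeal R
  set J := I.colon (m : Set R)
  obtain ⟨t, htm, ht⟩ := exists_isSMulRegular_of_one_le_moduleDepth hdepth
  have hJm : J ≤ m := IsLocalRing.le_maximalIdeal fun hJ => hne <|
    le_antisymm (hI ▸ I.le_radical) ((Submodule.colon_eq_top_iff_subset _).mp hJ)
  obtain ⟨c, hc⟩ : ∃ c, m ^ c ≤ J := by
    obtain ⟨c, hc⟩ := I.exists_radical_pow_le_of_fg (hI ▸ IsNoetherian.noetherian m)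
    exact ⟨c, hI ▸ hc.trans Ideal.le_colon⟩
  have hcJ : m ^ (c + c) ≤ J * J := pow_add m c c ▸ Ideal.mul_mono hc hc
  obtain ⟨n, hn⟩ := m.exists_pow_smul_top_inf_eq_bot (eq_bot_iff.mpr <|
    (Submodule.smul_mono_left hcJ).trans (Ideal.mul_smul_ker_mulMap_eq_bot J J).le)
  obtain ⟨s, hs⟩ := (Submodule.mulMap J J).exists_rightInverse_on_of_le_map
    (disjoint_iff.mpr hn) (Q := m ^ (n + (c + c))) (by
      rw [Submodule.map_smul'', Submodule.map_top, Submodule.mulMap_range, Ideal.smul_eq_mul,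
        pow_add]
      exact Ideal.mul_mono_right hcJ)
  have hμ : (1 : R) ∉ LinearMap.range (Submodule.mulMap J J) := by
    rw [Submodule.mulMap_range]
    exact fun h1 => IsLocalRing.notMem_maximalIdeal.mpr isUnit_one (hJm (Ideal.mul_le_left h1))
  exact nontrivial_HZ_one_of_rightInverse_on _ hμ (torsionZ_maxSet_eq_bot_of_isSMulRegular htm ht)
    (fun p hp => p.isPrime.le_of_pow_le hp) s hs
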